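/- arXiv:2410.00564 — 2 statements merged into one kernel-verified Lean document; each statement's English description precedes it below -/
import Mathlib

section
/- Pathwise error bound between the search-based total income computed with learned models and the true total income (deterministic-trajectory version of the paper's Theorem C.2). Let 0 ≤ γ < 1 and H ≥ 1 be given, and let ε_r, ε_s, ε_Q ≥ 0. Let x_0,…,x_{H−1}, x'_0,…,x'_{H−1} ∈ X with x'_0 = x_0 and dist(x'_t, x_t) ≤ ε_s for every 1 ≤ t ≤ H−1, and let s_H, s'_H ∈ S with dist(s'_H, s_H) ≤ ε_s. Then |(Σ_{t=0}^{H−1} γ^t · r̂(x'_t) + γ^H · max_a Q̂(s'_H, a)) − (Σ_{t=0}^{H−1} γ^t · r(x_t) + γ^H · max_a Q(s_H, a))| ≤ ((1−γ^H)/(1−γ))·ε_r + (((γ−γ^H)/(1−γ))·L_r + γ^H·L_Q)·ε_s + γ^H·ε_Q. -/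
lemma sup'_abs_sub_le {A : Type*} [Fintype A] [Nonempty A]
    (f g : A → ℝ) (c : ℝ) (h : ∀ a, |f a - g a| ≤ c) :
    |Finset.univ.sup' Finset.univ_nonempty f - Finset.univ.sup' Finset.univ_nonempty g| ≤ c := by
  rw [abs_sub_le_iff]
  constructor
  · rw [sub_le_iff_le_add]
    apply Finset.sup'_le
    intro a _
    have h1 : g a ≤ Finset.univ.sup' Finset.univ_nonempty g := Finset.le_sup' g (Finset.mem_univ a)
    have := (abs_le.mp (h a)).2
    linarith
  · rw [sub_le_iff_le_add]
    apply Finset.sup'_le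
    intro a _
    have h1 : f a ≤ Finset.univ.sup' Finset.univ_nonempty f := Finset.le_sup' f (Finset.mem_univ a)
    have := (abs_le.mp (h a)).1
    linarith

/-- Pathwise error bound between the search-based total income computed with learned
models and the true total income (deterministic-trajectory version of Theorem C.2). -/
theorem search_based_Q_error_bound_pathwise
    {X S A : Type*} [MetricSpace X] [MetricSpace S] [Fintype A] [Nonempty A]
    (γ : ℝ) (hγ0 : 0 ≤ γ) (hγ1 : γ < 1)
    (H : ℕ) (hH : 1 ≤ H)
    (εr εs εQ : ℝ) (hεr : 0 ≤ εr) (hεs : 0 ≤ εs) (hεQ : 0 ≤ εQ)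
    (Lr LQ : ℝ) (hLr : 0 ≤ Lr) (hLQ : 0 ≤ LQ)
    (r rhat : X → ℝ)
    (hrlip : ∀ x y : X, |rhat x - rhat y| ≤ Lr * dist x y)
    (hrerr : ∀ x : X, |rhat x - r x| ≤ εr)
    (Q Qhat : S → A → ℝ)
    (hQlip : ∀ a : A, ∀ s s' : S, |Qhat s a - Qhat s' a| ≤ LQ * dist s s')
    (hQerr : ∀ (s : S) (a : A), |Qhat s a - Q s a| ≤ εQ)
    (x x' : ℕ → X) (hx0 : x' 0 = x 0)
    (hxdist : ∀ t : ℕ, 1 ≤ t → t ≤ H - 1 → dist (x' t) (x t) ≤ εs)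
    (sH sH' : S) (hsdist : dist sH' sH ≤ εs) :
    |((∑ t ∈ Finset.range H, γ ^ t * rhat (x' t))
        + γ ^ H * (Finset.univ.sup' Finset.univ_nonempty (fun a => Qhat sH' a)))
      - ((∑ t ∈ Finset.range H, γ ^ t * r (x t))
        + γ ^ H * (Finset.univ.sup' Finset.univ_nonempty (fun a => Q sH a)))|
      ≤ ((1 - γ ^ H) / (1 - γ)) * εr
        + (((γ - γ ^ H) / (1 - γ)) * Lr + γ ^ H * LQ) * εs
        + γ ^ H * εQ := by
  have hγne : γ ≠ 1 := ne_of_lt hγ1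
  have hpos : (0:ℝ) < 1 - γ := by linarith
  have hγH : 0 ≤ γ ^ H := pow_nonneg hγ0 H
  -- pointwise reward bound
  have hterm : ∀ t ∈ Finset.range H,
      |γ ^ t * rhat (x' t) - γ ^ t * r (x t)| ≤
        γ ^ t * (εr + (if t = 0 then 0 else Lr * εs)) := by
    intro t ht
    rw [← mul_sub, abs_mul, abs_of_nonneg (pow_nonneg hγ0 t)]
    apply mul_le_mul_of_nonneg_left _ (pow_nonneg hγ0 t)
    rcases Nat.eq_zero_or_pos t with h0 | h1
    · subst h0; simpa [hx0] using hrerr (x 0)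
    · rw [if_neg (Nat.pos_iff_ne_zero.mp h1)]
      have htH := Finset.mem_range.mp ht
      have hd : dist (x' t) (x t) ≤ εs := hxdist t h1 (by omega)
      calc |rhat (x' t) - r (x t)|
          ≤ |rhat (x' t) - rhat (x t)| + |rhat (x t) - r (x t)| := abs_sub_le _ _ _
        _ ≤ Lr * εs + εr := by
            have := hrlip (x' t) (x t)
            have := hrerr (x t)
            nlinarith [mul_le_mul_of_nonneg_left hd hLr]
        _ = εr + Lr * εs := by ring
  -- sum bound
  have hsum : |∑ t ∈ Finset.range H, γ ^ t * rhat (x' t)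
      - ∑ t ∈ Finset.range H, γ ^ t * r (x t)| ≤
      ((1 - γ ^ H) / (1 - γ)) * εr + ((γ - γ ^ H) / (1 - γ)) * (Lr * εs) := by
    rw [← Finset.sum_sub_distrib]
    calc |∑ t ∈ Finset.range H, (γ ^ t * rhat (x' t) - γ ^ t * r (x t))|
        ≤ ∑ t ∈ Finset.range H, |γ ^ t * rhat (x' t) - γ ^ t * r (x t)| :=
          Finset.abs_sum_le_sum_abs _ _
      _ ≤ ∑ t ∈ Finset.range H, γ ^ t * (εr + (if t = 0 then 0 else Lr * εs)) :=
          Finset.sum_le_sum hterm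
      _ = ((1 - γ ^ H) / (1 - γ)) * εr + ((γ - γ ^ H) / (1 - γ)) * (Lr * εs) := by
          have hgeo : ∑ t ∈ Finset.range H, γ ^ t = (1 - γ ^ H) / (1 - γ) := by
            rw [geom_sum_eq hγne]
            rw [div_eq_div_iff (by intro h; apply hγne; linarith) (ne_of_gt hpos)]
            ring
          have : ∀ t ∈ Finset.range H, γ ^ t * (εr + (if t = 0 then 0 else Lr * εs))
              = γ ^ t * εr + (γ ^ t * (Lr * εs) - (if t = 0 then Lr * εs else 0)) := by
            intro t _
            rcases eq_or_ne t 0 with h | h <;> simp [h] <;> ring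
          rw [Finset.sum_congr rfl this, Finset.sum_add_distrib, Finset.sum_sub_distrib,
            ← Finset.sum_mul, ← Finset.sum_mul, hgeo]
          rw [Finset.sum_ite_eq' (Finset.range H) 0 (fun _ => Lr * εs)]
          simp only [Finset.mem_range, hH, if_pos (by omega : 0 < H)]
          have h1 : (γ - γ ^ H) / (1 - γ) = (1 - γ ^ H) / (1 - γ) - 1 := by
            field_simp
            ring
          rw [h1]; ring
  -- sup bound
  have hsup : |Finset.univ.sup' Finset.univ_nonempty (fun a => Qhat sH' a)
      - Finset.univ.sup' Finset.univ_nonempty (fun a => Q sH a)| ≤ LQ * εs + εQ := by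
    apply sup'_abs_sub_le
    intro a
    calc |Qhat sH' a - Q sH a|
        ≤ |Qhat sH' a - Qhat sH a| + |Qhat sH a - Q sH a| := abs_sub_le _ _ _
      _ ≤ LQ * εs + εQ := by
          have h1 := hQlip a sH' sH
          have h2 := hQerr sH a
          nlinarith [mul_le_mul_of_nonneg_left hsdist hLQ]
  calc |((∑ t ∈ Finset.range H, γ ^ t * rhat (x' t))
        + γ ^ H * (Finset.univ.sup' Finset.univ_nonempty (fun a => Qhat sH' a)))
      - ((∑ t ∈ Finset.range H, γ ^ t * r (x t))
        + γ ^ H * (Finset.univ.sup' Finset.univ_nonempty (fun a => Q sH a)))|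
      ≤ |∑ t ∈ Finset.range H, γ ^ t * rhat (x' t)
          - ∑ t ∈ Finset.range H, γ ^ t * r (x t)|
        + γ ^ H * |Finset.univ.sup' Finset.univ_nonempty (fun a => Qhat sH' a)
          - Finset.univ.sup' Finset.univ_nonempty (fun a => Q sH a)| := by
        have heq : ((∑ t ∈ Finset.range H, γ ^ t * rhat (x' t))
            + γ ^ H * (Finset.univ.sup' Finset.univ_nonempty (fun a => Qhat sH' a)))
          - ((∑ t ∈ Finset.range H, γ ^ t * r (x t))
            + γ ^ H * (Finset.univ.sup' Finset.univ_nonempty (fun a => Q sH a)))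
          = (∑ t ∈ Finset.range H, γ ^ t * rhat (x' t)
              - ∑ t ∈ Finset.range H, γ ^ t * r (x t))
            + γ ^ H * (Finset.univ.sup' Finset.univ_nonempty (fun a => Qhat sH' a)
              - Finset.univ.sup' Finset.univ_nonempty (fun a => Q sH a)) := by ring
        rw [heq]
        refine (abs_add_le _ _).trans ?_
        rw [abs_mul, abs_of_nonneg hγH]
    _ ≤ ((1 - γ ^ H) / (1 - γ)) * εr + ((γ - γ ^ H) / (1 - γ)) * (Lr * εs)
        + γ ^ H * (LQ * εs + εQ) := by
        have := mul_le_mul_of_nonneg_left hsup hγH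
        linarith
    _ = ((1 - γ ^ H) / (1 - γ)) * εr
        + (((γ - γ ^ H) / (1 - γ)) * Lr + γ ^ H * LQ) * εs
        + γ ^ H * εQ := by ring
end

section
/- Error bound for search-based optimal Q-values (the paper's Theorem C.2, expectation form). Let 0 ≤ γ < 1 and H ≥ 1 be given, and let ε_r, ε_s, ε_Q ≥ 0. Let (Ω, μ) be a measure space with μ a probability measure. Let X_0,…,X_{H−1}, X'_0,…,X'_{H−1} : Ω → X and S_H, S'_H : Ω → S be measurable maps with X'_0 = X_0, such that the real-valued functions ω ↦ r(X_t(ω)), ω ↦ r̂(X'_t(ω)) (for each 0 ≤ t ≤ H−1), ω ↦ max_a Q(S_H(ω), a), ω ↦ max_a Q̂(S'_H(ω), a), ω ↦ dist(X'_t(ω), X_t(ω)) (for each 1 ≤ t ≤ H−1), and ω ↦ dist(S'_H(ω), S_H(ω)) are all integrable, and such that ∫ dist(X'_t, X_t) dμ ≤ ε_s for every 1 ≤ t ≤ H−1 and ∫ dist(S'_H, S_H) dμ ≤ ε_s. Then |∫ (Σ_{t=0}^{H−1} γ^t · r̂(X'_t) + γ^H · max_a Q̂(S'_H, a)) dμ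 − ∫ (Σ_{t=0}^{H−1} γ^t · r(X_t) + γ^H · max_a Q(S_H, a)) dμ| ≤ ((1−γ^H)/(1−γ))·ε_r + (((γ−γ^H)/(1−γ))·L_r + γ^H·L_Q)·ε_s + γ^H·ε_Q. -/
open MeasureTheory

/-- Error bound for search-based optimal Q-values (Theorem C.2, expectation form). -/
theorem search_based_Q_error_bound_expectation
    {X S A Ω : Type*} [MetricSpace X] [MetricSpace S] [Fintype A] [Nonempty A]
    [MeasurableSpace X] [MeasurableSpace S] [MeasurableSpace Ω]
    (μ : Measure Ω) [IsProbabilityMeasure μ]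
    (γ : ℝ) (hγ0 : 0 ≤ γ) (hγ1 : γ < 1)
    (H : ℕ) (hH : 1 ≤ H)
    (εr εs εQ : ℝ) (hεr : 0 ≤ εr) (hεs : 0 ≤ εs) (hεQ : 0 ≤ εQ)
    (Lr LQ : ℝ) (hLr : 0 ≤ Lr) (hLQ : 0 ≤ LQ)
    (r rhat : X → ℝ)
    (hrlip : ∀ x y : X, |rhat x - rhat y| ≤ Lr * dist x y)
    (hrerr : ∀ x : X, |rhat x - r x| ≤ εr)
    (Q Qhat : S → A → ℝ)
    (hQlip : ∀ a : A, ∀ s s' : S, |Qhat s a - Qhat s' a| ≤ LQ * dist s s')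
    (hQerr : ∀ (s : S) (a : A), |Qhat s a - Q s a| ≤ εQ)
    (Xt Xt' : ℕ → Ω → X) (SH SH' : Ω → S)
    (hXmeas : ∀ t, Measurable (Xt t)) (hX'meas : ∀ t, Measurable (Xt' t))
    (hSmeas : Measurable SH) (hS'meas : Measurable SH')
    (hX0 : Xt' 0 = Xt 0)
    (hint_r : ∀ t : ℕ, t ≤ H - 1 → Integrable (fun ω => r (Xt t ω)) μ)
    (hint_rhat : ∀ t : ℕ, t ≤ H - 1 → Integrable (fun ω => rhat (Xt' t ω)) μ)
    (hint_Q :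
      Integrable (fun ω => Finset.univ.sup' Finset.univ_nonempty (fun a => Q (SH ω) a)) μ)
    (hint_Qhat :
      Integrable (fun ω => Finset.univ.sup' Finset.univ_nonempty (fun a => Qhat (SH' ω) a)) μ)
    (hint_dX : ∀ t : ℕ, 1 ≤ t → t ≤ H - 1 →
      Integrable (fun ω => dist (Xt' t ω) (Xt t ω)) μ)
    (hint_dS : Integrable (fun ω => dist (SH' ω) (SH ω)) μ)
    (hdX : ∀ t : ℕ, 1 ≤ t → t ≤ H - 1 → ∫ ω, dist (Xt' t ω) (Xt t ω) ∂μ ≤ εs)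
    (hdS : ∫ ω, dist (SH' ω) (SH ω) ∂μ ≤ εs) :
    |(∫ ω, ((∑ t ∈ Finset.range H, γ ^ t * rhat (Xt' t ω))
          + γ ^ H * (Finset.univ.sup' Finset.univ_nonempty (fun a => Qhat (SH' ω) a))) ∂μ)
      - (∫ ω, ((∑ t ∈ Finset.range H, γ ^ t * r (Xt t ω))
          + γ ^ H * (Finset.univ.sup' Finset.univ_nonempty (fun a => Q (SH ω) a))) ∂μ)|
      ≤ ((1 - γ ^ H) / (1 - γ)) * εr
        + (((γ - γ ^ H) / (1 - γ)) * Lr + γ ^ H * LQ) * εs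
        + γ ^ H * εQ := by

  classical
  have h1γ : (0:ℝ) < 1 - γ := by linarith
  set F : Ω → ℝ := fun ω => Finset.univ.sup' Finset.univ_nonempty (fun a => Qhat (SH' ω) a)
    with hFdef
  set G : Ω → ℝ := fun ω => Finset.univ.sup' Finset.univ_nonempty (fun a => Q (SH ω) a)
    with hGdef
  have hle : ∀ t, t < H → t ≤ H - 1 := fun t ht => Nat.le_pred_of_lt ht
  -- integrability of distances for all t < H
  have hIdist : ∀ t, t < H → Integrable (fun ω => dist (Xt' t ω) (Xt t ω)) μ := by
    intro t ht
    rcases Nat.eq_zero_or_pos t with h0 | h1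
    · subst h0
      simp only [hX0, dist_self]
      exact integrable_const 0
    · exact hint_dX t h1 (hle t ht)
  -- distance integral values
  set D : ℕ → ℝ := fun t => ∫ ω, dist (Xt' t ω) (Xt t ω) ∂μ with hDdef
  have hD0 : D 0 = 0 := by simp [hDdef, hX0, dist_self]
  have hDle : ∀ t, 1 ≤ t → t < H → D t ≤ εs := fun t h1 ht => hdX t h1 (hle t ht)
  have hDnn : ∀ t, 0 ≤ D t := fun t => integral_nonneg (fun ω => dist_nonneg)
  -- split the two integrals
  have hIr : ∀ t ∈ Finset.range H, Integrable (fun ω => γ ^ t * r (Xt t ω)) μ :=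
    fun t ht => (hint_r t (hle t (Finset.mem_range.mp ht))).const_mul _
  have hIr' : ∀ t ∈ Finset.range H, Integrable (fun ω => γ ^ t * rhat (Xt' t ω)) μ :=
    fun t ht => (hint_rhat t (hle t (Finset.mem_range.mp ht))).const_mul _
  have hsplit1 : (∫ ω, ((∑ t ∈ Finset.range H, γ ^ t * rhat (Xt' t ω)) + γ ^ H * F ω) ∂μ)
      = (∑ t ∈ Finset.range H, γ ^ t * ∫ ω, rhat (Xt' t ω) ∂μ) + γ ^ H * ∫ ω, F ω ∂μ := by
    rw [integral_add (integrable_finset_sum _ hIr') (hint_Qhat.const_mul _),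
      integral_finset_sum _ hIr', integral_const_mul]
    simp only [integral_const_mul]
  have hsplit2 : (∫ ω, ((∑ t ∈ Finset.range H, γ ^ t * r (Xt t ω)) + γ ^ H * G ω) ∂μ)
      = (∑ t ∈ Finset.range H, γ ^ t * ∫ ω, r (Xt t ω) ∂μ) + γ ^ H * ∫ ω, G ω ∂μ := by
    rw [integral_add (integrable_finset_sum _ hIr) (hint_Q.const_mul _),
      integral_finset_sum _ hIr, integral_const_mul]
    simp only [integral_const_mul]
  -- per-term reward bound
  have hterm : ∀ t, t < H →
      |(∫ ω, rhat (Xt' t ω) ∂μ) - ∫ ω, r (Xt t ω) ∂μ| ≤ Lr * D t + εr := by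
    intro t ht
    have hir := hint_r t (hle t ht)
    have hir' := hint_rhat t (hle t ht)
    have hid := hIdist t ht
    rw [← integral_sub hir' hir]
    have hb : ∀ ω, |rhat (Xt' t ω) - r (Xt t ω)| ≤ Lr * dist (Xt' t ω) (Xt t ω) + εr := by
      intro ω
      calc |rhat (Xt' t ω) - r (Xt t ω)|
          ≤ |rhat (Xt' t ω) - rhat (Xt t ω)| + |rhat (Xt t ω) - r (Xt t ω)| :=
            abs_sub_le _ _ _
        _ ≤ Lr * dist (Xt' t ω) (Xt t ω) + εr := add_le_add (hrlip _ _) (hrerr _)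
    calc |∫ ω, (rhat (Xt' t ω) - r (Xt t ω)) ∂μ|
        ≤ ∫ ω, |rhat (Xt' t ω) - r (Xt t ω)| ∂μ := by
          simpa [Real.norm_eq_abs] using
            norm_integral_le_integral_norm (fun ω => rhat (Xt' t ω) - r (Xt t ω)) (μ := μ)
      _ ≤ ∫ ω, (Lr * dist (Xt' t ω) (Xt t ω) + εr) ∂μ :=
          integral_mono (hir'.sub hir).abs ((hid.const_mul _).add (integrable_const _)) hb
      _ = Lr * D t + εr := by
          rw [integral_add (hid.const_mul _) (integrable_const _), integral_const_mul,
            integral_const]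
          simp [hDdef]
  -- Q-value term bound
  have hQb : ∀ ω, |F ω - G ω| ≤ LQ * dist (SH' ω) (SH ω) + εQ := by
    intro ω
    rw [abs_sub_le_iff]
    constructor
    · rw [sub_le_iff_le_add]
      apply Finset.sup'_le
      intro a _
      have h1 := abs_le.mp (hQlip a (SH' ω) (SH ω))
      have h2 := abs_le.mp (hQerr (SH ω) a)
      have h3 : Q (SH ω) a ≤ G ω := Finset.le_sup' _ (Finset.mem_univ a)
      have := h1.2; have := h2.2
      linarith
    · rw [sub_le_iff_le_add]
      apply Finset.sup'_le
      intro a _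
      have h1 := abs_le.mp (hQlip a (SH' ω) (SH ω))
      have h2 := abs_le.mp (hQerr (SH ω) a)
      have h3 : Qhat (SH' ω) a ≤ F ω := Finset.le_sup' _ (Finset.mem_univ a)
      linarith [h1.1, h2.1]
  have hQterm : |(∫ ω, F ω ∂μ) - ∫ ω, G ω ∂μ| ≤ LQ * εs + εQ := by
    rw [← integral_sub hint_Qhat hint_Q]
    have hDSnn : 0 ≤ ∫ ω, dist (SH' ω) (SH ω) ∂μ :=
      integral_nonneg fun ω => dist_nonneg
    calc |∫ ω, (F ω - G ω) ∂μ|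
        ≤ ∫ ω, |F ω - G ω| ∂μ := by
          simpa [Real.norm_eq_abs] using
            norm_integral_le_integral_norm (fun ω => F ω - G ω) (μ := μ)
      _ ≤ ∫ ω, (LQ * dist (SH' ω) (SH ω) + εQ) ∂μ :=
          integral_mono (hint_Qhat.sub hint_Q).abs
            ((hint_dS.const_mul _).add (integrable_const _)) hQb
      _ = LQ * (∫ ω, dist (SH' ω) (SH ω) ∂μ) + εQ := by
          rw [integral_add (hint_dS.const_mul _) (integrable_const _), integral_const_mul,
            integral_const]
          simp
      _ ≤ LQ * εs + εQ := by nlinarith [mul_le_mul_of_nonneg_left hdS hLQ]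
  -- geometric sums
  have hγne : γ ≠ 1 := ne_of_lt hγ1
  have hSG : ∑ t ∈ Finset.range H, γ ^ t = (1 - γ ^ H) / (1 - γ) := by
    rw [geom_sum_eq hγne, ← neg_div_neg_eq]
    ring_nf
  have hpow_nn : ∀ t : ℕ, (0:ℝ) ≤ γ ^ t := fun t => pow_nonneg hγ0 t
  -- sum of γ^t * D t
  have hsumD : ∑ t ∈ Finset.range H, γ ^ t * D t ≤ ((γ - γ ^ H) / (1 - γ)) * εs := by
    have hrw : ∑ t ∈ Finset.range H, γ ^ t * D t
        = γ ^ 0 * D 0 + ∑ t ∈ Finset.Ico 1 H, γ ^ t * D t := by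
      rw [Finset.range_eq_Ico, Finset.sum_eq_sum_Ico_succ_bot hH]
    have h1 : ∑ t ∈ Finset.Ico 1 H, γ ^ t * D t ≤ ∑ t ∈ Finset.Ico 1 H, γ ^ t * εs := by
      apply Finset.sum_le_sum
      intro t ht
      have := Finset.mem_Ico.mp ht
      exact mul_le_mul_of_nonneg_left (hDle t this.1 this.2) (hpow_nn t)
    have h2 : ∑ t ∈ Finset.Ico 1 H, γ ^ t * εs
        = ((∑ t ∈ Finset.range H, γ ^ t) - 1) * εs := by
      rw [← Finset.sum_mul]
      congr 1
      rw [Finset.range_eq_Ico, Finset.sum_eq_sum_Ico_succ_bot hH]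
      simp
    have h3 : ((∑ t ∈ Finset.range H, γ ^ t) - 1) * εs = ((γ - γ ^ H) / (1 - γ)) * εs := by
      rw [hSG]
      congr 1
      field_simp
      ring
    rw [hrw, hD0]
    simp only [mul_zero, zero_add]
    calc ∑ t ∈ Finset.Ico 1 H, γ ^ t * D t ≤ ∑ t ∈ Finset.Ico 1 H, γ ^ t * εs := h1
      _ = ((γ - γ ^ H) / (1 - γ)) * εs := by rw [h2, h3]
  -- assemble
  rw [hsplit1, hsplit2]
  have hmain : (∑ t ∈ Finset.range H, γ ^ t * ∫ ω, rhat (Xt' t ω) ∂μ) + γ ^ H * (∫ ω, F ω ∂μ)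
      - ((∑ t ∈ Finset.range H, γ ^ t * ∫ ω, r (Xt t ω) ∂μ) + γ ^ H * ∫ ω, G ω ∂μ)
      = (∑ t ∈ Finset.range H,
          γ ^ t * ((∫ ω, rhat (Xt' t ω) ∂μ) - ∫ ω, r (Xt t ω) ∂μ))
        + γ ^ H * ((∫ ω, F ω ∂μ) - ∫ ω, G ω ∂μ) := by
    rw [Finset.sum_congr rfl (fun t _ => mul_sub (γ ^ t) _ _), Finset.sum_sub_distrib]
    ring
  rw [hmain]
  calc |(∑ t ∈ Finset.range H,
          γ ^ t * ((∫ ω, rhat (Xt' t ω) ∂μ) - ∫ ω, r (Xt t ω) ∂μ))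
        + γ ^ H * ((∫ ω, F ω ∂μ) - ∫ ω, G ω ∂μ)|
      ≤ (∑ t ∈ Finset.range H,
          |γ ^ t * ((∫ ω, rhat (Xt' t ω) ∂μ) - ∫ ω, r (Xt t ω) ∂μ)|)
        + |γ ^ H * ((∫ ω, F ω ∂μ) - ∫ ω, G ω ∂μ)| :=
        (abs_add_le _ _).trans (add_le_add_left (Finset.abs_sum_le_sum_abs _ _) _)
    _ ≤ (∑ t ∈ Finset.range H, γ ^ t * (Lr * D t + εr)) + γ ^ H * (LQ * εs + εQ) := by
        apply add_le_add
        · apply Finset.sum_le_sum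
          intro t ht
          rw [abs_mul, abs_of_nonneg (hpow_nn t)]
          exact mul_le_mul_of_nonneg_left (hterm t (Finset.mem_range.mp ht)) (hpow_nn t)
        · rw [abs_mul, abs_of_nonneg (hpow_nn H)]
          exact mul_le_mul_of_nonneg_left hQterm (hpow_nn H)
    _ ≤ (Lr * (((γ - γ ^ H) / (1 - γ)) * εs) + ((1 - γ ^ H) / (1 - γ)) * εr)
        + γ ^ H * (LQ * εs + εQ) := by
        have : ∑ t ∈ Finset.range H, γ ^ t * (Lr * D t + εr)
            = Lr * (∑ t ∈ Finset.range H, γ ^ t * D t)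
              + (∑ t ∈ Finset.range H, γ ^ t) * εr := by
          rw [Finset.mul_sum, Finset.sum_mul, ← Finset.sum_add_distrib]
          apply Finset.sum_congr rfl
          intro t _
          ring
        rw [this, hSG]
        have := mul_le_mul_of_nonneg_left hsumD hLr
        linarith
    _ = ((1 - γ ^ H) / (1 - γ)) * εr
        + (((γ - γ ^ H) / (1 - γ)) * Lr + γ ^ H * LQ) * εs + γ ^ H * εQ := by ring
end
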